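/- arXiv:1901.03804 — 2 statements merged into one kernel-verified Lean document; each statement's English description precedes it below -/
import Mathlib

section
/- In a k-connected graph G, for any vertex v and any set U of at least k vertices with v ∉ U, there exist k pairwise internally disjoint paths from distinct vertices of U to v (a 'fan'), such that distinct paths share no vertices except v. -/
/-- A graph is `k`-connected if it has more than `k` vertices and removing any set
of fewer than `k` vertices leaves it connected. -/
def KConnected {V : Type*} [DecidableEq V] (G : SimpleGraph V) (k : ℕ) : Prop :=
  k < Nat.card V ∧
    ∀ S : Finset V, S.card < k → (((⊤ : G.Subgraph).deleteVerts ↑S).coe).Connected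

open SimpleGraph Finset
section MengerProof
variable {V : Type*}

def Gres (G : SimpleGraph V) (W : Set V) : SimpleGraph V where
  Adj a b := G.Adj a b ∧ a ∈ W ∧ b ∈ W
  symm := ⟨fun a b h => ⟨h.1.symm, h.2.2, h.2.1⟩⟩
  loopless := ⟨fun a h => G.loopless.irrefl a h.1⟩

lemma Gres_adj {G : SimpleGraph V} {W : Set V} {a b : V} :
    (Gres G W).Adj a b ↔ G.Adj a b ∧ a ∈ W ∧ b ∈ W := Iff.rfl

lemma Gres_le {G : SimpleGraph V} {W : Set V} : Gres G W ≤ G := fun _ _ h => h.1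

lemma Gres_walk {G : SimpleGraph V} {W : Set V} {u v : V} (p : G.Walk u v)
    (hW : ∀ x ∈ p.support, x ∈ W) :
    ∃ q : (Gres G W).Walk u v, q.support = p.support := by
  refine ⟨p.transfer _ ?_, Walk.support_transfer _ _⟩
  intro e he
  induction e with
  | _ x y =>
    rw [SimpleGraph.mem_edgeSet, Gres_adj]
    exact ⟨p.edges_subset_edgeSet he, hW x (p.fst_mem_support_of_mem_edges he),
      hW y (p.snd_mem_support_of_mem_edges he)⟩

lemma le_walk {G H : SimpleGraph V} (hle : H ≤ G) {u v : V} (p : H.Walk u v) :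
    ∃ q : G.Walk u v, q.support = p.support := by
  refine ⟨p.transfer _ ?_, Walk.support_transfer _ _⟩
  intro e he
  induction e with
  | _ x y =>
    rw [SimpleGraph.mem_edgeSet]
    exact hle (p.edges_subset_edgeSet he)

def MSep (G : SimpleGraph V) (A B S : Finset V) : Prop :=
  ∀ ⦃a⦄, a ∈ A → ∀ ⦃b⦄, b ∈ B → ∀ w : G.Walk a b, ∃ s ∈ S, s ∈ w.support

lemma MSep_symm {G : SimpleGraph V} {A B S : Finset V} (h : MSep G A B S) :
    MSep G B A S := by
  intro b hb a ha w
  obtain ⟨s, hs1, hs2⟩ := h ha hb w.reverse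
  exact ⟨s, hs1, by rwa [Walk.support_reverse, List.mem_reverse] at hs2⟩

lemma exists_first_hit {G : SimpleGraph V} {a b : V} (S : Finset V) (w : G.Walk a b)
    (h : ∃ s ∈ S, s ∈ w.support) :
    ∃ z, z ∈ S ∧ ∃ q : G.Walk a z, (∀ x ∈ q.support, x ∈ w.support) ∧
      (∀ x ∈ q.support, x ∈ S → x = z) := by
  induction w with
  | nil =>
    obtain ⟨s, hs, hs'⟩ := h
    simp only [Walk.support_nil, List.mem_singleton] at hs'
    subst hs'
    exact ⟨s, hs, Walk.nil, by simp, by simp⟩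
  | @cons u v c hadj p ih =>
    by_cases hu : u ∈ S
    · exact ⟨u, hu, Walk.nil, by simp, by simp⟩
    · have h' : ∃ s ∈ S, s ∈ p.support := by
        obtain ⟨s, hs, hs'⟩ := h
        rw [Walk.support_cons, List.mem_cons] at hs'
        rcases hs' with rfl | hs'
        · exact absurd hs hu
        · exact ⟨s, hs, hs'⟩
      obtain ⟨z, hz, q, hq1, hq2⟩ := ih h'
      refine ⟨z, hz, Walk.cons hadj q, ?_, ?_⟩
      · intro x hx
        rw [Walk.support_cons, List.mem_cons] at hx ⊢
        rcases hx with rfl | hx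
        · exact Or.inl rfl
        · exact Or.inr (hq1 x hx)
      · intro x hx hxS
        rw [Walk.support_cons, List.mem_cons] at hx
        rcases hx with rfl | hx
        · exact absurd hxS hu
        · exact hq2 x hx hxS

lemma support_eq_or_adj' {G : SimpleGraph V} {a b : V} (w : G.Walk a b) :
    ∀ x ∈ w.support, x = a ∨ ∃ y, G.Adj x y := by
  induction w with
  | nil => intro x hx; simp at hx; exact Or.inl hx
  | @cons u v c hadj p ih =>
    intro x hx
    rw [Walk.support_cons, List.mem_cons] at hx
    rcases hx with rfl | hx
    · exact Or.inl rfl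
    · rcases ih x hx with rfl | hy
      · exact Or.inr ⟨u, hadj.symm⟩
      · exact Or.inr hy

lemma Gres_support_mem {G : SimpleGraph V} {W : Set V} {u z : V}
    (q : (Gres G W).Walk u z) : ∀ x ∈ q.support, x = u ∨ x ∈ W := by
  intro x hx
  rcases support_eq_or_adj' q x hx with rfl | ⟨y, hy⟩
  · exact Or.inl rfl
  · exact Or.inr hy.2.1

lemma counting_aux {n : ℕ} {S : Finset V} (hS : S.card = n)
    (b : Fin n → V) (hb : ∀ i, b i ∈ S) (hbinj : Function.Injective b)
    (supp : Fin n → List V) (hmem : ∀ i, b i ∈ supp i)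
    (hdisj : ∀ i j, i ≠ j → ∀ x, x ∈ supp i → x ∉ supp j) :
    (∀ s ∈ S, ∃ i, b i = s) ∧ (∀ i x, x ∈ supp i → x ∈ S → x = b i) := by
  classical
  have hsurj : ∀ s ∈ S, ∃ i, b i = s := by
    intro s hs
    have himg : (Finset.univ.image b) = S := by
      apply Finset.eq_of_subset_of_card_le
      · intro x hx
        simp only [Finset.mem_image] at hx
        obtain ⟨i, _, rfl⟩ := hx
        exact hb i
      · rw [hS, Finset.card_image_of_injective _ hbinj, Finset.card_univ, Fintype.card_fin]
    rw [← himg] at hs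
    simp only [Finset.mem_image, Finset.mem_univ, true_and] at hs
    exact hs
  refine ⟨hsurj, ?_⟩
  intro i x hx hxS
  obtain ⟨j, rfl⟩ := hsurj x hxS
  by_cases hij : j = i
  · subst hij; rfl
  · exact absurd hx (fun h => hdisj i j (fun h' => hij h'.symm) _ h (hmem j))

lemma takeUntil_end_eq [DecidableEq V] {G : SimpleGraph V} {a c x : V} {q : G.Walk a c}
    (hq : q.IsPath) (hx : x ∈ q.support) (hc : c ∈ (q.takeUntil x hx).support) : x = c := by
  by_contra hne
  have hspec := q.take_spec hx
  have hnd : ((q.takeUntil x hx).append (q.dropUntil x hx)).support.Nodup := by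
    rw [hspec]; exact hq.support_nodup
  rw [Walk.support_append] at hnd
  have hcend : c ∈ (q.dropUntil x hx).support := Walk.end_mem_support _
  rw [Walk.support_eq_cons (q.dropUntil x hx)] at hcend
  rcases List.mem_cons.1 hcend with h | h
  · exact hne h.symm
  · exact (List.disjoint_of_nodup_append hnd) hc h

/-- The `A`-side of a separator `S`. -/
def WAset (G : SimpleGraph V) (A S : Finset V) : Set V :=
  {w | ∃ a, a ∈ A ∧ ∃ r : G.Walk a w, ∀ y ∈ r.support, y ∈ S → y = w}

lemma WAset_A {G : SimpleGraph V} {A S : Finset V} {a : V} (ha : a ∈ A) :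
    a ∈ WAset G A S := by
  refine ⟨a, ha, Walk.nil, ?_⟩
  intro y hy _
  simpa using hy

lemma half_sep [DecidableEq V] {G : SimpleGraph V} {A B S : Finset V} {n : ℕ}
    (hSsep : MSep G A B S) (hsep : ∀ S' : Finset V, MSep G A B S' → n ≤ S'.card) :
    ∀ T : Finset V, MSep (Gres G (WAset G A S)) A S T → n ≤ T.card := by
  intro T hT
  apply hsep
  intro a ha b hb w
  obtain ⟨z, hzS, q0, hq01, hq02⟩ := exists_first_hit S w (hSsep ha hb w)
  have hqsup : q0.bypass.support ⊆ q0.support := Walk.support_bypass_subset _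
  have hqpath : q0.bypass.IsPath := Walk.bypass_isPath _
  have hWA : ∀ x ∈ q0.bypass.support, x ∈ WAset G A S := by
    intro x hx
    refine ⟨a, ha, q0.bypass.takeUntil x hx, ?_⟩
    intro y hy hyS
    have hy' : y ∈ q0.bypass.support := Walk.support_takeUntil_subset _ hx hy
    have hyz : y = z := hq02 y (hqsup hy') hyS
    subst hyz
    exact (takeUntil_end_eq hqpath hx hy).symm
  obtain ⟨q₁, hq₁⟩ := Gres_walk q0.bypass hWA
  obtain ⟨t, htT, ht⟩ := hT ha hzS q₁
  exact ⟨t, htT, hq01 _ (hqsup (hq₁ ▸ ht))⟩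

lemma edge_ncard_le [Fintype V] (G : SimpleGraph V) :
    G.edgeSet.ncard ≤ Nat.card (Sym2 V) := by
  have := Set.ncard_le_ncard (Set.subset_univ G.edgeSet) Set.finite_univ
  rwa [Set.ncard_univ] at this

lemma base_hit [DecidableEq V] {G : SimpleGraph V} {A B : Finset V} (s₀ : Finset V)
    (C : Finset V)
    (hC1 : ∀ x, x ∈ A → x ∈ B → x ∈ C)
    (hC2 : ∀ x, x ∈ A → x ∉ B → x ∉ s₀ → x ∈ C)
    (hC3 : ∀ x y, x ∈ s₀ → G.Adj x y → y ∈ B → y ∉ A → y ∈ C) :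
    ∀ {a b : V} (w : G.Walk a b), a ∈ A → b ∈ B → (∀ x ∈ w.support, x ∈ A ∪ B) →
      ∃ x ∈ C, x ∈ w.support := by
  intro a b w
  induction w with
  | @nil u => intro ha hb _; exact ⟨u, hC1 u ha hb, by simp⟩
  | @cons u c b hadj p ih =>
    intro ha hb hsupp
    by_cases haB : u ∈ B
    · exact ⟨u, hC1 u ha haB, by simp⟩
    by_cases hcB : c ∈ B
    · by_cases hcA : c ∈ A
      · exact ⟨c, hC1 c hcA hcB, by simp⟩
      · by_cases haS : u ∈ s₀
        · exact ⟨c, hC3 u c haS hadj hcB hcA, by simp⟩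
        · exact ⟨u, hC2 u ha haB haS, by simp⟩
    · have hcA : c ∈ A := by
        have := hsupp c (by simp)
        rw [Finset.mem_union] at this
        tauto
      obtain ⟨x, hxC, hx⟩ := ih hcA hb
        (fun x hx => hsupp x (by rw [Walk.support_cons]; exact List.mem_cons_of_mem _ hx))
      exact ⟨x, hxC, by rw [Walk.support_cons]; exact List.mem_cons_of_mem _ hx⟩

/-- Base case of Menger: no vertex outside `A ∪ B` has an edge. -/
lemma menger_base [Fintype V] [DecidableEq V] (G : SimpleGraph V) (A B : Finset V) (n : ℕ)
    (hAI : ∀ x, x ∉ A → x ∉ B → ∀ y, ¬ G.Adj x y)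
    (hsep : ∀ S : Finset V, MSep G A B S → n ≤ S.card) :
    ∃ (a b : Fin n → V) (P : ∀ i, G.Walk (a i) (b i)),
      (∀ i, a i ∈ A ∧ b i ∈ B ∧ (P i).IsPath) ∧
      (∀ i j, i ≠ j → ∀ x, x ∈ (P i).support → x ∉ (P j).support) := by
  classical
  set I : Finset V := A ∩ B with hI
  set A' : Finset V := A \ B with hA'
  set B' : Finset V := B \ A with hB'
  have hsupp : ∀ {a b : V} (w : G.Walk a b), a ∈ A → ∀ x ∈ w.support, x ∈ A ∪ B := by
    intro a b w ha x hx
    rcases support_eq_or_adj' w x hx with rfl | ⟨y, hy⟩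
    · exact Finset.mem_union_left _ ha
    · by_contra hxAB
      rw [Finset.mem_union] at hxAB
      push_neg at hxAB
      exact hAI x hxAB.1 hxAB.2 y hy
  have hNB : ∀ s₀ : Finset V, s₀ ⊆ A' →
      n ≤ I.card + (A'.card - s₀.card) + ((B'.filter (fun y => ∃ u ∈ s₀, G.Adj u y)).card) := by
    intro s₀ hs₀
    set NB := B'.filter (fun y => ∃ u ∈ s₀, G.Adj u y) with hNBdef
    set C : Finset V := I ∪ ((A' \ s₀) ∪ NB) with hC
    have hCsep : MSep G A B C := by
      intro a ha b hb w
      apply base_hit s₀ C ?_ ?_ ?_ w ha hb (hsupp w ha)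
      · intro x hx1 hx2; exact Finset.mem_union_left _ (Finset.mem_inter.2 ⟨hx1, hx2⟩)
      · intro x hx1 hx2 hx3
        exact Finset.mem_union_right _ (Finset.mem_union_left _
          (Finset.mem_sdiff.2 ⟨Finset.mem_sdiff.2 ⟨hx1, hx2⟩, hx3⟩))
      · intro x y hx hxy hy1 hy2
        exact Finset.mem_union_right _ (Finset.mem_union_right _
          (Finset.mem_filter.2 ⟨Finset.mem_sdiff.2 ⟨hy1, hy2⟩, x, hx, hxy⟩))
    calc n ≤ C.card := hsep C hCsep
    _ ≤ I.card + ((A' \ s₀) ∪ NB).card := Finset.card_union_le _ _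
    _ ≤ I.card + ((A' \ s₀).card + NB.card) := Nat.add_le_add_left (Finset.card_union_le _ _) _
    _ = I.card + (A'.card - s₀.card) + NB.card := by rw [Finset.card_sdiff_of_subset hs₀]; ring
  by_cases hIn : n ≤ I.card
  · obtain ⟨J, hJI, hJcard⟩ := Finset.exists_subset_card_eq hIn
    have e := J.equivFinOfCardEq hJcard
    refine ⟨fun i => (e.symm i : V), fun i => (e.symm i : V), fun i => Walk.nil, ?_, ?_⟩
    · intro i
      have : ((e.symm i : V)) ∈ I := hJI (e.symm i).2
      rw [hI, Finset.mem_inter] at this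
      exact ⟨this.1, this.2, Walk.IsPath.nil⟩
    · intro i j hij x hx hx'
      simp only [Walk.support_nil, List.mem_singleton] at hx hx'
      apply hij
      apply e.symm.injective
      apply Subtype.coe_injective
      exact hx.symm.trans hx'
  · push_neg at hIn
    have hAsep : MSep G A B A := fun a ha b _ w => ⟨a, ha, w.start_mem_support⟩
    have hAcard : n ≤ I.card + A'.card := by
      have := hsep A hAsep
      have hsplit : I.card + A'.card = A.card := by
        rw [hI, hA']
        exact Finset.card_inter_add_card_sdiff A B
      omega
    set m := n - I.card with hm
    set d := A'.card - m with hd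
    have hmA' : m ≤ A'.card := by omega
    set t : {x // x ∈ A'} → Finset (V ⊕ Fin d) := fun x =>
      ((B'.filter (fun y => G.Adj x.val y)).map ⟨Sum.inl, Sum.inl_injective⟩) ∪
        (Finset.univ.map ⟨Sum.inr, Sum.inr_injective⟩) with ht
    have hall : ∀ s : Finset {x // x ∈ A'}, s.card ≤ (s.biUnion t).card := by
      intro s
      rcases s.eq_empty_or_nonempty with rfl | hs
      · simp
      set s₀ := s.image Subtype.val with hs₀def
      have hs₀A : s₀ ⊆ A' := by
        intro x hx
        rw [hs₀def, Finset.mem_image] at hx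
        obtain ⟨y, _, rfl⟩ := hx
        exact y.2
      have hs₀card : s₀.card = s.card := Finset.card_image_of_injective _ Subtype.val_injective
      set NB := B'.filter (fun y => ∃ u ∈ s₀, G.Adj u y) with hNBdef
      have hsub : (NB.map ⟨Sum.inl, Sum.inl_injective⟩) ∪
          (Finset.univ.map ⟨Sum.inr, Sum.inr_injective⟩) ⊆ s.biUnion t := by
        intro z hz
        rw [Finset.mem_union] at hz
        rcases hz with hz | hz
        · rw [Finset.mem_map] at hz
          obtain ⟨y, hy, rfl⟩ := hz
          rw [hNBdef, Finset.mem_filter] at hy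
          obtain ⟨hyB, u, hu, huy⟩ := hy
          rw [hs₀def, Finset.mem_image] at hu
          obtain ⟨x, hx, rfl⟩ := hu
          refine Finset.mem_biUnion.2 ⟨x, hx, ?_⟩
          rw [ht]
          exact Finset.mem_union_left _ (Finset.mem_map.2 ⟨y, Finset.mem_filter.2 ⟨hyB, huy⟩, rfl⟩)
        · obtain ⟨x, hx⟩ := hs
          refine Finset.mem_biUnion.2 ⟨x, hx, ?_⟩
          rw [ht]
          exact Finset.mem_union_right _ hz
      have hcard2 : NB.card + d ≤ (s.biUnion t).card := by
        have hdisj : Disjoint (NB.map ⟨Sum.inl, Sum.inl_injective⟩)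
            ((Finset.univ : Finset (Fin d)).map ⟨Sum.inr, Sum.inr_injective⟩) := by
          rw [Finset.disjoint_left]
          rintro z hz1 hz2
          rw [Finset.mem_map] at hz1 hz2
          obtain ⟨y1, -, rfl⟩ := hz1
          obtain ⟨y2, -, h⟩ := hz2
          simp at h
        have h1 : ((NB.map ⟨Sum.inl, Sum.inl_injective⟩) ∪
            ((Finset.univ : Finset (Fin d)).map ⟨Sum.inr, Sum.inr_injective⟩)).card
            = NB.card + d := by
          rw [Finset.card_union_of_disjoint hdisj]
          simp
        rw [← h1]
        exact Finset.card_le_card hsub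
      have := hNB s₀ hs₀A
      rw [← hNBdef] at this
      have hd' : d = A'.card - (n - I.card) := by rw [hd, hm]
      have h4 : s₀.card ≤ A'.card := Finset.card_le_card hs₀A
      omega
    obtain ⟨f, hfinj, hft⟩ := (Finset.all_card_le_biUnion_card_iff_exists_injective t).1 hall
    set M := Finset.univ.filter (fun x : {x // x ∈ A'} => ∃ y, f x = Sum.inl y) with hM
    have hprex : ∀ x ∈ M, ∃ y, f x = Sum.inl y ∧ y ∈ B' ∧ G.Adj x.val y := by
      intro x hx
      rw [hM, Finset.mem_filter] at hx
      obtain ⟨-, y, hy⟩ := hx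
      refine ⟨y, hy, ?_⟩
      have h1 := hft x
      rw [hy, ht, Finset.mem_union] at h1
      rcases h1 with h1 | h1
      · rw [Finset.mem_map] at h1
        obtain ⟨y', hy', hy2⟩ := h1
        simp only [Function.Embedding.coeFn_mk, Sum.inl.injEq] at hy2
        subst hy2
        rw [Finset.mem_filter] at hy'
        exact ⟨hy'.1, hy'.2⟩
      · rw [Finset.mem_map] at h1
        obtain ⟨y', -, hy2⟩ := h1
        simp at hy2
    set pr : {x // x ∈ A'} → V := fun x => if h : x ∈ M then (hprex x h).choose else x.val
      with hpr
    have hprM : ∀ x (hx : x ∈ M), f x = Sum.inl (pr x) ∧ pr x ∈ B' ∧ G.Adj x.val (pr x) := by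
      intro x hx
      rw [hpr]
      simp only [dif_pos hx]
      exact (hprex x hx).choose_spec
    have hMcard : m ≤ M.card := by
      set Mc := Finset.univ.filter (fun x : {x // x ∈ A'} => ¬ ∃ y, f x = Sum.inl y) with hMc
      have hMccard : Mc.card ≤ d := by
        have himg : Mc.image f ⊆ (Finset.univ : Finset (Fin d)).map ⟨Sum.inr, Sum.inr_injective⟩ := by
          intro z hz
          rw [Finset.mem_image] at hz
          obtain ⟨x, hx, rfl⟩ := hz
          rw [hMc, Finset.mem_filter] at hx
          rcases h : f x with y | z'
          · exact absurd ⟨y, h⟩ hx.2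
          · exact Finset.mem_map.2 ⟨z', Finset.mem_univ _, rfl⟩
        have h2 : Mc.card = (Mc.image f).card :=
          (Finset.card_image_of_injective _ hfinj).symm
        have h3 := Finset.card_le_card himg
        simp only [Finset.card_map, Finset.card_univ, Fintype.card_fin] at h3
        omega
      have huniv : M.card + Mc.card = A'.card := by
        rw [hM, hMc, Finset.card_filter_add_card_filter_not, Finset.card_univ,
          Fintype.card_coe]
      omega
    obtain ⟨J, hJM, hJcard⟩ := Finset.exists_subset_card_eq hMcard
    set Jv := J.image (fun x => x.val) with hJv
    have hJvcard : Jv.card = m := by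
      rw [hJv, Finset.card_image_of_injective _ Subtype.val_injective, hJcard]
    have hJvA' : Jv ⊆ A' := by
      intro x hx
      rw [hJv, Finset.mem_image] at hx
      obtain ⟨y, _, rfl⟩ := hx
      exact y.2
    have hdisjIJ : Disjoint I Jv := by
      rw [Finset.disjoint_left]
      intro x hxI hxJ
      have h1 : x ∈ B := (Finset.mem_inter.1 hxI).2
      have h2 : x ∉ B := (Finset.mem_sdiff.1 (hJvA' hxJ)).2
      exact h2 h1
    set Q := I ∪ Jv with hQ
    have hQcard : Q.card = n := by
      rw [hQ, Finset.card_union_of_disjoint hdisjIJ, hJvcard]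
      omega
    have e := Q.equivFinOfCardEq hQcard
    -- the partner function
    set β : V → V := fun q => if hq : q ∈ A' then (if (⟨q, hq⟩ : {x // x ∈ A'}) ∈ M
      then pr ⟨q, hq⟩ else q) else q with hβ
    have hQmem : ∀ q ∈ Q, q ∈ I ∨ ∃ hq : q ∈ A', (⟨q, hq⟩ : {x // x ∈ A'}) ∈ M ∧ β q = pr ⟨q, hq⟩ := by
      intro q hq
      rw [hQ, Finset.mem_union] at hq
      rcases hq with hq | hq
      · exact Or.inl hq
      · have hqA' : q ∈ A' := hJvA' hq
        refine Or.inr ⟨hqA', ?_⟩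
        rw [hJv, Finset.mem_image] at hq
        obtain ⟨x, hxJ, hxval⟩ := hq
        have hxM : x ∈ M := hJM hxJ
        have hxeq : (⟨q, hqA'⟩ : {x // x ∈ A'}) = x := Subtype.ext hxval.symm
        rw [hxeq]
        refine ⟨hxM, ?_⟩
        rw [hβ]
        simp only [dif_pos hqA']
        rw [if_pos]
        · congr 1
        · rw [hxeq]; exact hxM
    have hInotA' : ∀ q ∈ I, β q = q := by
      intro q hq
      have hqB : q ∈ B := (Finset.mem_inter.1 hq).2
      have hqA' : q ∉ A' := fun h => (Finset.mem_sdiff.1 h).2 hqB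
      rw [hβ]; simp only [dif_neg hqA']
    have hβA : ∀ q ∈ Q, q ∈ A := by
      intro q hq
      rw [hQ, Finset.mem_union] at hq
      rcases hq with hq | hq
      · exact (Finset.mem_inter.1 hq).1
      · exact (Finset.mem_sdiff.1 (hJvA' hq)).1
    have hβB : ∀ q ∈ Q, β q ∈ B := by
      intro q hq
      rcases hQmem q hq with hqI | ⟨hqA', hM', hβq⟩
      · rw [hInotA' q hqI]; exact (Finset.mem_inter.1 hqI).2
      · rw [hβq]; exact (Finset.mem_sdiff.1 (hprM _ hM').2.1).1
    have hβ3 : ∀ q ∈ Q, β q = q ∨ (G.Adj q (β q) ∧ β q ∉ A) := by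
      intro q hq
      rcases hQmem q hq with hqI | ⟨hqA', hM', hβq⟩
      · exact Or.inl (hInotA' q hqI)
      · refine Or.inr ?_
        rw [hβq]
        exact ⟨(hprM _ hM').2.2, (Finset.mem_sdiff.1 (hprM _ hM').2.1).2⟩
    have hβinj : ∀ q ∈ Q, ∀ q' ∈ Q, β q = β q' → q = q' := by
      intro q hq q' hq' heq
      rcases hQmem q hq with hqI | ⟨hqA', hMq, hβq⟩ <;>
        rcases hQmem q' hq' with hqI' | ⟨hqA'', hMq', hβq'⟩
      · rw [hInotA' q hqI, hInotA' q' hqI'] at heq; exact heq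
      · rw [hInotA' q hqI, hβq'] at heq
        have h1 : q ∈ A := (Finset.mem_inter.1 hqI).1
        have h2 : pr ⟨q', hqA''⟩ ∉ A := (Finset.mem_sdiff.1 (hprM _ hMq').2.1).2
        exact absurd (heq ▸ h1) h2
      · rw [hInotA' q' hqI', hβq] at heq
        have h1 : q' ∈ A := (Finset.mem_inter.1 hqI').1
        have h2 : pr ⟨q, hqA'⟩ ∉ A := (Finset.mem_sdiff.1 (hprM _ hMq).2.1).2
        exact absurd (heq.symm ▸ h1) h2
      · rw [hβq, hβq'] at heq
        have hfeq : f ⟨q, hqA'⟩ = f ⟨q', hqA''⟩ := by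
          rw [(hprM _ hMq).1, (hprM _ hMq').1, heq]
        have := hfinj hfeq
        exact congrArg Subtype.val this
    -- build the system
    have hwalk : ∀ (q : {x // x ∈ Q}), ∃ w : G.Walk q.val (β q.val),
        w.IsPath ∧ ∀ x ∈ w.support, x = q.val ∨ x = β q.val := by
      intro q
      rcases hβ3 q.val q.2 with h | ⟨hadj, -⟩
      · exact ⟨Walk.nil.copy rfl h.symm, by simp, by simp⟩
      · refine ⟨Walk.cons hadj Walk.nil, ?_, ?_⟩
        · simp [Walk.isPath_def, hadj.ne, hadj.ne']
        · intro x hx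
          simp only [Walk.support_cons, Walk.support_nil, List.mem_cons,
            List.mem_singleton, List.not_mem_nil, or_false] at hx
          tauto
    choose w hw1 hw2 using hwalk
    refine ⟨fun i => (e.symm i : V), fun i => β (e.symm i : V),
      fun i => w (e.symm i), ?_, ?_⟩
    · intro i
      exact ⟨hβA _ (e.symm i).2, hβB _ (e.symm i).2, hw1 _⟩
    · intro i j hij x hx hx'
      have hainj : (e.symm i : V) ≠ (e.symm j : V) := by
        intro h
        exact hij (e.symm.injective (Subtype.coe_injective h))
      have hQi := (e.symm i).2
      have hQj := (e.symm j).2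
      have hcross : ∀ (p q : V), p ∈ Q → q ∈ Q → p ≠ q → p ≠ β q := by
        intro p q hp hq hpq h
        rcases hβ3 q hq with h1 | ⟨_, h2⟩
        · exact hpq (h.trans h1)
        · exact h2 (h ▸ hβA p hp)
      rcases hw2 _ x hx with h1 | h1 <;> rcases hw2 _ x hx' with h2 | h2
      · exact hainj (h1.symm.trans h2)
      · exact hcross _ _ hQi hQj hainj (h1.symm.trans h2)
      · exact hcross _ _ hQj hQi hainj.symm (h2.symm.trans h1)
      · exact hainj (hβinj _ hQi _ hQj (h1.symm.trans h2))

lemma menger_aux [Fintype V] [DecidableEq V] (N : ℕ) :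
    ∀ (G : SimpleGraph V) (A B : Finset V) (n : ℕ),
      {x | x ∉ A ∧ x ∉ B ∧ ∃ y, G.Adj x y}.ncard * (Nat.card (Sym2 V) + 1)
        + G.edgeSet.ncard ≤ N →
      (∀ S : Finset V, MSep G A B S → n ≤ S.card) →
      ∃ (a b : Fin n → V) (P : ∀ i, G.Walk (a i) (b i)),
        (∀ i, a i ∈ A ∧ b i ∈ B ∧ (P i).IsPath) ∧
        (∀ i j, i ≠ j → ∀ x, x ∈ (P i).support → x ∉ (P j).support) := by
  induction N with
  | zero =>
    intro G A B n hμ hsep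
    apply menger_base G A B n ?_ hsep
    intro x hxA hxB y hadj
    have h1 : {x | x ∉ A ∧ x ∉ B ∧ ∃ y, G.Adj x y}.ncard * (Nat.card (Sym2 V) + 1) = 0 := by
      omega
    have h2 : {x | x ∉ A ∧ x ∉ B ∧ ∃ y, G.Adj x y}.ncard = 0 := by
      rcases Nat.mul_eq_zero.1 h1 with h | h
      · exact h
      · omega
    have h3 : {x | x ∉ A ∧ x ∉ B ∧ ∃ y, G.Adj x y} = ∅ :=
      (Set.ncard_eq_zero (Set.toFinite _)).1 h2
    have : x ∈ ({x | x ∉ A ∧ x ∉ B ∧ ∃ y, G.Adj x y} : Set V) := ⟨hxA, hxB, y, hadj⟩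
    rw [h3] at this
    exact this
  | succ N ih =>
    intro G A B n hμ hsep
    by_cases hAIe : ∃ x, x ∉ A ∧ x ∉ B ∧ ∃ y, G.Adj x y
    swap
    · apply menger_base G A B n ?_ hsep
      intro x hxA hxB y hadj
      exact hAIe ⟨x, hxA, hxB, y, hadj⟩
    obtain ⟨v, hvA, hvB, y₀, hvy⟩ := hAIe
    have hE'sub : (Gres G {x | x ≠ v}).edgeSet ⊂ G.edgeSet := by
      constructor
      · exact SimpleGraph.edgeSet_mono Gres_le
      · intro hsub
        have h1 : s(v, y₀) ∈ (Gres G {x | x ≠ v}).edgeSet := hsub (by rwa [mem_edgeSet])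
        rw [mem_edgeSet, Gres_adj] at h1
        exact h1.2.1 rfl
    have hE'card : (Gres G {x | x ≠ v}).edgeSet.ncard < G.edgeSet.ncard :=
      Set.ncard_lt_ncard hE'sub (Set.toFinite _)
    have hvAI : v ∈ {x | x ∉ A ∧ x ∉ B ∧ ∃ y, G.Adj x y} := ⟨hvA, hvB, y₀, hvy⟩
    by_cases hsmall : ∃ Y : Finset V, MSep (Gres G {x | x ≠ v}) A B Y ∧ Y.card < n
    swap
    · -- case 1a: delete the edges at v
      have hsep' : ∀ S : Finset V, MSep (Gres G {x | x ≠ v}) A B S → n ≤ S.card := by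
        intro S hS
        by_contra h
        push_neg at h
        exact hsmall ⟨S, hS, h⟩
      have hAI'card : {x | x ∉ A ∧ x ∉ B ∧ ∃ y, (Gres G {x | x ≠ v}).Adj x y}.ncard ≤
          {x | x ∉ A ∧ x ∉ B ∧ ∃ y, G.Adj x y}.ncard := by
        apply Set.ncard_le_ncard ?_ (Set.toFinite _)
        rintro x ⟨h1, h2, y, h3⟩
        exact ⟨h1, h2, y, h3.1⟩
      have hμ' : {x | x ∉ A ∧ x ∉ B ∧ ∃ y, (Gres G {x | x ≠ v}).Adj x y}.ncard *
          (Nat.card (Sym2 V) + 1) + (Gres G {x | x ≠ v}).edgeSet.ncard ≤ N := by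
        have h4 := Nat.mul_le_mul_right (Nat.card (Sym2 V) + 1) hAI'card
        omega
      obtain ⟨a, b, P, h1, h2⟩ := ih (Gres G {x | x ≠ v}) A B n hμ' hsep'
      choose Q hQ using fun i => le_walk (Gres_le (W := {x | x ≠ v})) (P i)
      refine ⟨a, b, Q, fun i => ⟨(h1 i).1, (h1 i).2.1, ?_⟩, fun i j hij x hx hx' => ?_⟩
      · rw [Walk.isPath_def, hQ i]
        exact (h1 i).2.2.support_nodup
      · rw [hQ i] at hx
        rw [hQ j] at hx'
        exact h2 i j hij x hx hx'
    · -- case 1b: a separator of size exactly n containing v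
      obtain ⟨Y, hYsep, hYcard⟩ := hsmall
      have hSsep : MSep G A B (insert v Y) := by
        intro a ha b hb w
        by_cases hv : v ∈ w.support
        · exact ⟨v, Finset.mem_insert_self _ _, hv⟩
        · obtain ⟨q, hq⟩ := Gres_walk (W := {x | x ≠ v}) w
            (fun x hx hxv => hv (hxv ▸ hx))
          obtain ⟨s, hs, hs'⟩ := hYsep ha hb q
          exact ⟨s, Finset.mem_insert_of_mem hs, by rwa [hq] at hs'⟩
      set S := insert v Y with hSdef
      have hScard : S.card = n := by
        have h1 := hsep S hSsep
        have h2 : S.card ≤ Y.card + 1 := Finset.card_insert_le _ _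
        omega
      have hvS : v ∈ S := Finset.mem_insert_self _ _
      have hsep1 := half_sep hSsep hsep
      have hsep2 := half_sep (MSep_symm hSsep) (fun S' hS' => hsep S' (MSep_symm hS'))
      -- measure bounds
      have hmeas : ∀ (AI' : Set V),
          AI' ⊆ {x | x ∉ A ∧ x ∉ B ∧ ∃ y, G.Adj x y} \ {v} →
          ∀ (H : SimpleGraph V), H ≤ G →
          AI'.ncard * (Nat.card (Sym2 V) + 1) + H.edgeSet.ncard ≤ N := by
        intro AI' hsub H hH
        have h1 : AI'.ncard < {x | x ∉ A ∧ x ∉ B ∧ ∃ y, G.Adj x y}.ncard := by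
          calc AI'.ncard ≤ ({x | x ∉ A ∧ x ∉ B ∧ ∃ y, G.Adj x y} \ {v}).ncard :=
              Set.ncard_le_ncard hsub (Set.toFinite _)
          _ < _ := Set.ncard_diff_singleton_lt_of_mem hvAI (Set.toFinite _)
        have h2 : H.edgeSet.ncard ≤ Nat.card (Sym2 V) := edge_ncard_le H
        have h3 : AI'.ncard * (Nat.card (Sym2 V) + 1) ≤
            ({x | x ∉ A ∧ x ∉ B ∧ ∃ y, G.Adj x y}.ncard - 1) * (Nat.card (Sym2 V) + 1) :=
          Nat.mul_le_mul_right _ (by omega)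
        have h4 : ({x | x ∉ A ∧ x ∉ B ∧ ∃ y, G.Adj x y}.ncard - 1) * (Nat.card (Sym2 V) + 1)
            + (Nat.card (Sym2 V) + 1)
            = {x | x ∉ A ∧ x ∉ B ∧ ∃ y, G.Adj x y}.ncard * (Nat.card (Sym2 V) + 1) := by
          rw [← Nat.succ_mul]
          congr 1
          omega
        omega
      have hAI1 : {x | x ∉ A ∧ x ∉ S ∧ ∃ y, (Gres G (WAset G A S)).Adj x y} ⊆
          {x | x ∉ A ∧ x ∉ B ∧ ∃ y, G.Adj x y} \ {v} := by
        rintro x ⟨hxA, hxS, y, hxy⟩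
        refine ⟨⟨hxA, ?_, y, hxy.1⟩, fun h => hxS (h ▸ hvS)⟩
        intro hxB
        obtain ⟨a, ha, r, hr⟩ := hxy.2.1
        obtain ⟨s, hsS, hs⟩ := hSsep ha hxB r
        exact hxS ((hr s hs hsS) ▸ hsS)
      have hAI2 : {x | x ∉ B ∧ x ∉ S ∧ ∃ y, (Gres G (WAset G B S)).Adj x y} ⊆
          {x | x ∉ A ∧ x ∉ B ∧ ∃ y, G.Adj x y} \ {v} := by
        rintro x ⟨hxB, hxS, y, hxy⟩
        refine ⟨⟨?_, hxB, y, hxy.1⟩, fun h => hxS (h ▸ hvS)⟩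
        intro hxA
        obtain ⟨b, hb, r, hr⟩ := hxy.2.1
        obtain ⟨s, hsS, hs⟩ := (MSep_symm hSsep) hb hxA r
        exact hxS ((hr s hs hsS) ▸ hsS)
      obtain ⟨a₁, b₁, P₁, h₁, hd₁⟩ := ih (Gres G (WAset G A S)) A S n
        (hmeas _ hAI1 _ Gres_le) hsep1
      obtain ⟨a₂, b₂, P₂, h₂, hd₂⟩ := ih (Gres G (WAset G B S)) B S n
        (hmeas _ hAI2 _ Gres_le) hsep2
      have hsupp₁ : ∀ i x, x ∈ (P₁ i).support → x ∈ WAset G A S := by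
        intro i x hx
        rcases Gres_support_mem (P₁ i) x hx with rfl | hW
        · exact WAset_A (h₁ i).1
        · exact hW
      have hsupp₂ : ∀ i x, x ∈ (P₂ i).support → x ∈ WAset G B S := by
        intro i x hx
        rcases Gres_support_mem (P₂ i) x hx with rfl | hW
        · exact WAset_A (h₂ i).1
        · exact hW
      have hb₁inj : Function.Injective b₁ := by
        intro i j h
        by_contra hij
        refine hd₁ i j hij (b₁ i) (Walk.end_mem_support _) ?_
        rw [h]
        exact Walk.end_mem_support _
      have hb₂inj : Function.Injective b₂ := by
        intro i j h
        by_contra hij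
        refine hd₂ i j hij (b₂ i) (Walk.end_mem_support _) ?_
        rw [h]
        exact Walk.end_mem_support _
      obtain ⟨hcov₁, honly₁⟩ := counting_aux hScard b₁ (fun i => (h₁ i).2.1) hb₁inj
        (fun i => (P₁ i).support) (fun i => Walk.end_mem_support _) hd₁
      obtain ⟨hcov₂, honly₂⟩ := counting_aux hScard b₂ (fun i => (h₂ i).2.1) hb₂inj
        (fun i => (P₂ i).support) (fun i => Walk.end_mem_support _) hd₂
      choose σ hσ using fun i => hcov₂ _ ((h₁ i).2.1)
      have hσinj : Function.Injective σ := by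
        intro i j h
        apply hb₁inj
        rw [← hσ i, ← hσ j, h]
      choose Q₁ hQ₁ using fun i => le_walk (Gres_le (W := WAset G A S)) (P₁ i)
      choose Q₂ hQ₂ using fun i => le_walk (Gres_le (W := WAset G B S)) (P₂ i)
      have hcross : ∀ i j x, x ∈ (P₁ i).support → x ∈ (P₂ j).support →
          x = b₁ i ∧ x = b₂ j := by
        intro i j x hx₁ hx₂
        by_cases hxS : x ∈ S
        · exact ⟨honly₁ i x hx₁ hxS, honly₂ j x hx₂ hxS⟩
        · exfalso
          obtain ⟨a, ha, r₁, hr₁⟩ := hsupp₁ i x hx₁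
          obtain ⟨b, hb, r₂, hr₂⟩ := hsupp₂ j x hx₂
          obtain ⟨s, hsS, hs⟩ := hSsep ha hb (r₁.append r₂.reverse)
          rw [Walk.mem_support_append_iff] at hs
          rcases hs with hs | hs
          · exact hxS ((hr₁ s hs hsS) ▸ hsS)
          · rw [Walk.support_reverse, List.mem_reverse] at hs
            exact hxS ((hr₂ s hs hsS) ▸ hsS)
      refine ⟨a₁, fun i => a₂ (σ i),
        fun i => (Q₁ i).append (((Q₂ (σ i)).reverse).copy (hσ i) rfl), ?_, ?_⟩
      · intro i
        refine ⟨(h₁ i).1, (h₂ (σ i)).1, ?_⟩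
        have hnd2 : (((Q₂ (σ i)).reverse).copy (hσ i) rfl).support.Nodup := by
          rw [Walk.support_copy, Walk.support_reverse, List.nodup_reverse, hQ₂ (σ i)]
          exact (h₂ (σ i)).2.2.support_nodup
        rw [Walk.isPath_def, Walk.support_append]
        refine List.Nodup.append ?_ (hnd2.sublist (List.tail_sublist _)) ?_
        · rw [hQ₁ i]
          exact (h₁ i).2.2.support_nodup
        · intro x hx1 hxt
          have hx2 : x ∈ (((Q₂ (σ i)).reverse).copy (hσ i) rfl).support :=
            List.mem_of_mem_tail hxt
          have hx2' : x ∈ (P₂ (σ i)).support := by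
            rw [Walk.support_copy, Walk.support_reverse, List.mem_reverse, hQ₂ (σ i)] at hx2
            exact hx2
          have hx1' : x ∈ (P₁ i).support := by rwa [hQ₁ i] at hx1
          have hxb := hcross i (σ i) x hx1' hx2'
          have hhead : (((Q₂ (σ i)).reverse).copy (hσ i) rfl).support =
              b₁ i :: (((Q₂ (σ i)).reverse).copy (hσ i) rfl).support.tail :=
            Walk.support_eq_cons _
          rw [hhead] at hnd2
          have : b₁ i ∉ (((Q₂ (σ i)).reverse).copy (hσ i) rfl).support.tail :=
            (List.nodup_cons.1 hnd2).1
          exact this (hxb.1 ▸ hxt)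
      · intro i j hij x hx hx'
        rw [Walk.mem_support_append_iff] at hx hx'
        have conv1 : ∀ k, x ∈ (Q₁ k).support → x ∈ (P₁ k).support := by
          intro k h; rwa [hQ₁ k] at h
        have conv2 : ∀ k, x ∈ (((Q₂ (σ k)).reverse).copy (hσ k) rfl).support →
            x ∈ (P₂ (σ k)).support := by
          intro k h
          rwa [Walk.support_copy, Walk.support_reverse, List.mem_reverse, hQ₂ (σ k)] at h
        rcases hx with hx | hx <;> rcases hx' with hx' | hx'
        · exact hd₁ i j hij x (conv1 i hx) (conv1 j hx')
        · have h1 := hcross i (σ j) x (conv1 i hx) (conv2 j hx')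
          have : b₁ i = b₁ j := by rw [← h1.1, h1.2, hσ j]
          exact hij (hb₁inj this)
        · have h1 := hcross j (σ i) x (conv1 j hx') (conv2 i hx)
          have : b₁ j = b₁ i := by rw [← h1.1, h1.2, hσ i]
          exact hij (hb₁inj this.symm)
        · exact hd₂ (σ i) (σ j) (fun h => hij (hσinj h)) x (conv2 i hx) (conv2 j hx')

theorem menger_thm [Fintype V] [DecidableEq V] (G : SimpleGraph V) (A B : Finset V) (n : ℕ)
    (hsep : ∀ S : Finset V, MSep G A B S → n ≤ S.card) :
    ∃ (a b : Fin n → V) (P : ∀ i, G.Walk (a i) (b i)),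
      (∀ i, a i ∈ A ∧ b i ∈ B ∧ (P i).IsPath) ∧
      (∀ i j, i ≠ j → ∀ x, x ∈ (P i).support → x ∉ (P j).support) :=
  menger_aux _ G A B n le_rfl hsep


theorem menger_fan_aux [Fintype V] [DecidableEq V]
    (G : SimpleGraph V) (k : ℕ)
    (hcard : k < Nat.card V)
    (hconn : ∀ S : Finset V, S.card < k → (((⊤ : G.Subgraph).deleteVerts ↑S).coe).Connected)
    (v : V) (U : Finset V) (hvU : v ∉ U) (hU : k ≤ U.card) :
    ∃ (a : Fin k → V) (P : ∀ i, G.Walk (a i) v),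
      Function.Injective a ∧
      (∀ i, a i ∈ U ∧ (P i).IsPath) ∧
      ∀ i j, i ≠ j → ∀ x, x ∈ (P i).support → x ∈ (P j).support → x = v := by
  classical
  have hwalk_avoid : ∀ (T : Finset V), T.card < k → ∀ u w : V, u ∉ T → w ∉ T →
      ∃ p : G.Walk u w, ∀ x ∈ p.support, x ∉ T := by
    intro T hT u w hu hw
    have hconn2 := hconn T hT
    have hu' : u ∈ ((⊤ : G.Subgraph).deleteVerts ↑T).verts := by
      simp only [Subgraph.deleteVerts_verts, Subgraph.verts_top, Set.mem_diff,
        Set.mem_univ, true_and, Finset.mem_coe]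
      exact hu
    have hw' : w ∈ ((⊤ : G.Subgraph).deleteVerts ↑T).verts := by
      simp only [Subgraph.deleteVerts_verts, Subgraph.verts_top, Set.mem_diff,
        Set.mem_univ, true_and, Finset.mem_coe]
      exact hw
    obtain ⟨p⟩ := hconn2.preconnected ⟨u, hu'⟩ ⟨w, hw'⟩
    refine ⟨p.map (Subgraph.hom _), ?_⟩
    intro x hx
    replace hx : x ∈ (p.map (Subgraph.hom _)).support := hx
    rw [Walk.support_map, List.mem_map] at hx
    obtain ⟨⟨x', hx'⟩, _, rfl⟩ := hx
    have hx'2 := hx'.2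
    simpa using hx'2
  have hGvndv : ∀ {x y : V} (q : (Gres G {x | x ≠ v}).Walk x y), x ≠ v →
      ∀ z ∈ q.support, z ≠ v := by
    intro x y q hx z hz
    rcases Gres_support_mem q z hz with rfl | hW
    · exact hx
    · exact hW
  have hsep : ∀ T : Finset V, MSep (Gres G {x | x ≠ v}) U (G.neighborFinset v) T →
      k ≤ T.card := by
    suffices haux : ∀ T : Finset V, v ∉ T →
        MSep (Gres G {x | x ≠ v}) U (G.neighborFinset v) T → k ≤ T.card by
      intro T hT
      by_cases hvT : v ∈ T
      · have h1 : MSep (Gres G {x | x ≠ v}) U (G.neighborFinset v) (T.erase v) := by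
          intro a ha b hb w
          obtain ⟨s, hs1, hs2⟩ := hT ha hb w
          exact ⟨s, Finset.mem_erase.2 ⟨hGvndv w (fun h => hvU (h ▸ ha)) s hs2, hs1⟩, hs2⟩
        have h2 := haux (T.erase v) (Finset.notMem_erase _ _) h1
        have h3 := Finset.card_erase_le (a := v) (s := T)
        omega
      · exact haux T hvT hT
    intro T hvT hT
    by_contra hlt
    push_neg at hlt
    have hUT : ¬ U ⊆ T := by
      intro h
      have := Finset.card_le_card h
      omega
    obtain ⟨u, hu, huT⟩ := Finset.not_subset.1 hUT
    have huv : u ≠ v := fun h => hvU (h ▸ hu)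
    obtain ⟨p, hp⟩ := hwalk_avoid T hlt u v huT hvT
    have hbp : ∀ x ∈ p.bypass.support, x ∈ p.support := fun x hx =>
      p.support_bypass_subset hx
    cases hr : p.bypass.reverse with
    | nil => exact absurd rfl huv
    | cons hadj q =>
      rename_i w'
      have hrp : (Walk.cons hadj q).IsPath := by
        rw [← hr]
        exact p.bypass_isPath.reverse
      rw [Walk.cons_isPath_iff] at hrp
      have hqsub : ∀ x ∈ q.support, x ∈ p.support := by
        intro x hx
        have h1 : x ∈ p.bypass.reverse.support := by
          rw [hr, Walk.support_cons]
          exact List.mem_cons_of_mem _ hx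
        rw [Walk.support_reverse, List.mem_reverse] at h1
        exact hbp x h1
      have hqv : ∀ x ∈ q.reverse.support, x ∈ ({x | x ≠ v} : Set V) := by
        intro x hx
        rw [Walk.support_reverse, List.mem_reverse] at hx
        exact fun h => hrp.2 (h ▸ hx)
      obtain ⟨q₁, hq₁⟩ := Gres_walk q.reverse hqv
      have hw'N : w' ∈ G.neighborFinset v := by
        rw [mem_neighborFinset]
        exact hadj
      obtain ⟨t, htT, ht⟩ := hT hu hw'N q₁
      rw [hq₁, Walk.support_reverse, List.mem_reverse] at ht
      exact (hp t (hqsub t ht)) htT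
  obtain ⟨a, b, P, h1, h2⟩ := menger_thm (Gres G {x | x ≠ v}) U (G.neighborFinset v) k hsep
  have hvnot : ∀ i, v ∉ (P i).support := by
    intro i hv
    exact (hGvndv (P i) (fun h => hvU (h ▸ (h1 i).1)) v hv) rfl
  choose Q hQ using fun i => le_walk (Gres_le (W := {x | x ≠ v})) (P i)
  have hadj : ∀ i, G.Adj (b i) v := fun i =>
    (G.mem_neighborFinset v (b i) |>.1 (h1 i).2.1).symm
  refine ⟨a, fun i => (Q i).append (Walk.cons (hadj i) Walk.nil), ?_, ?_, ?_⟩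
  · intro i j h
    by_contra hij
    refine h2 i j hij (a i) (Walk.start_mem_support _) ?_
    rw [h]
    exact Walk.start_mem_support _
  · intro i
    refine ⟨(h1 i).1, ?_⟩
    rw [Walk.isPath_def, Walk.support_append]
    refine List.Nodup.append ?_ ?_ ?_
    · rw [hQ i]
      exact (h1 i).2.2.support_nodup
    · simp
    · intro x hx1 hx2
      simp only [Walk.support_cons, Walk.support_nil, List.tail_cons,
        List.mem_singleton] at hx2
      subst hx2
      rw [hQ i] at hx1
      exact hvnot i hx1
  · intro i j hij x hx hx'
    rw [Walk.mem_support_append_iff] at hx hx'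
    have conv : ∀ (m : Fin k) (y : V),
        y ∈ (Walk.cons (hadj m) Walk.nil).support.tail → y = v := by
      intro m y hy
      simpa using hy
    have convS : ∀ (m : Fin k) (y : V),
        y ∈ (Walk.cons (hadj m) Walk.nil).support → y = b m ∨ y = v := by
      intro m y hy
      simp only [Walk.support_cons, Walk.support_nil, List.mem_cons,
        List.mem_singleton, List.not_mem_nil, or_false] at hy
      tauto
    rcases hx with hx | hx <;> rcases hx' with hx' | hx'
    · rw [hQ i] at hx
      rw [hQ j] at hx'
      exact absurd hx' (h2 i j hij x hx)
    · rcases convS j x hx' with rfl | rfl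
      · exfalso
        rw [hQ i] at hx
        exact (h2 i j hij _ hx) (Walk.end_mem_support _)
      · rfl
    · rcases convS i x hx with rfl | rfl
      · exfalso
        rw [hQ j] at hx'
        exact (h2 j i hij.symm _ hx') (Walk.end_mem_support _)
      · rfl
    · rcases convS i x hx with h1 | h1
      · rcases convS j x hx' with h' | h'
        · exfalso
          refine (h2 i j hij (b i) (Walk.end_mem_support _)) ?_
          rw [← h1, h']
          exact Walk.end_mem_support _
        · exact h'
      · exact h1

end MengerProof

/-- Fan version of Menger's theorem: in a `k`-connected graph, for any vertex `v` and
any set `U` of at least `k` vertices not containing `v`, there is a fan of `k` paths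
from `k` distinct vertices of `U` to `v`, pairwise sharing no vertex other than `v`. -/
theorem menger_fan {V : Type*} [Fintype V] [DecidableEq V]
    (G : SimpleGraph V) (k : ℕ) (hconn : KConnected G k)
    (v : V) (U : Finset V) (hvU : v ∉ U) (hU : k ≤ U.card) :
    ∃ (a : Fin k → V) (P : ∀ i, G.Walk (a i) v),
      Function.Injective a ∧
      (∀ i, a i ∈ U ∧ (P i).IsPath) ∧
      ∀ i j, i ≠ j → ∀ x, x ∈ (P i).support → x ∈ (P j).support → x = v :=
  menger_fan_aux G k hconn.1 hconn.2 v U hvU hU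
end

section
/- In any execution of the consensus algorithm, there exists an iteration of the main loop whose candidate faulty set F contains all actually faulty nodes; hence, combining the agreement lemma (non-faulty nodes agree at the end of that iteration) with the validity lemma (states of non-faulty nodes are always some non-faulty node's earlier state), all non-faulty nodes output the same value and it is the input of some non-faulty node. -/
/-!
Track the set of values held by non-faulty nodes. Validity says this set can only shrink
from one iteration to the next, so it stays inside the set of non-faulty inputs. The
enumeration of candidate sets reaches `F = T`, where agreement makes the set a singleton,
and a set that only shrinks stays a subsingleton up to the last iteration.
-/

lemma Fin.antitone_image_of_forall_exists_eq {α β : Type*} {n : ℕ} {s : Fin (n + 1) → α → β}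
    {S : Set α} (h : ∀ i : Fin n, ∀ v ∈ S, ∃ u ∈ S, s i.succ v = s i.castSucc u) :
    Antitone fun i => s i '' S := by
  refine Fin.antitone_iff_succ_le.2 fun i => ?_
  rintro _ ⟨v, hv, rfl⟩
  obtain ⟨u, hu, hvu⟩ := h i v hv
  exact ⟨u, hu, hvu.symm⟩

theorem consensus_wrapup_general {V : Type*}
    (f m : ℕ) (T : Finset V) (hT : T.card ≤ f)
    (iter : Fin m → Finset V)
    (hiter : ∀ F : Finset V, F.card ≤ f → ∃ i, iter i = F)
    (input : V → Bool)
    (state : Fin (m + 1) → V → Bool)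
    (hinit : ∀ v : V, state 0 v = input v)
    (hvalidity : ∀ i : Fin m, ∀ v ∉ T, ∃ u ∉ T,
      state i.succ v = state i.castSucc u)
    (hagreement : ∀ i : Fin m, T ⊆ iter i → ∀ v ∉ T, ∀ w ∉ T,
      state i.succ v = state i.succ w) :
    (∀ v ∉ T, ∀ w ∉ T, state (Fin.last m) v = state (Fin.last m) w) ∧
    (∀ v ∉ T, ∃ u ∉ T, state (Fin.last m) v = input u) := by
  set correct : Set V := {v | v ∉ T}
  have hshrink : Antitone fun i => state i '' correct :=
    Fin.antitone_image_of_forall_exists_eq hvalidity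
  obtain ⟨i, hi⟩ := hiter T hT
  have hagree : (state i.succ '' correct).Subsingleton := by
    rintro _ ⟨v, hv, rfl⟩ _ ⟨w, hw, rfl⟩
    exact hagreement i hi.ge v hv w hw
  refine ⟨fun v hv w hw => ?_, fun v hv => ?_⟩
  · exact hagree.anti (hshrink (Fin.le_last i.succ)) ⟨v, hv, rfl⟩ ⟨w, hw, rfl⟩
  · obtain ⟨u, hu, hvu⟩ := hshrink (Fin.zero_le _) ⟨v, hv, rfl⟩
    exact ⟨u, hu, hvu.symm.trans (hinit u)⟩

/-- Byzantine consensus (Theorem 1, wrap-up): the loop enumerates all candidate sets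
`F` with `|F| ≤ f`, so some iteration has `T ⊆ F`; combining the agreement lemma and
the validity lemma, at the end all non-faulty nodes hold the same value and this value
is the input of some non-faulty node. -/
theorem consensus_wrapup {V : Type*} [Fintype V] [DecidableEq V]
    (f m : ℕ) (T : Finset V) (hT : T.card ≤ f)
    (iter : Fin m → Finset V)
    (hiter : ∀ F : Finset V, F.card ≤ f → ∃ i, iter i = F)
    (input : V → Bool)
    (state : Fin (m + 1) → V → Bool)
    (hinit : ∀ v : V, state 0 v = input v)
    (hvalidity : ∀ i : Fin m, ∀ v ∉ T, ∃ u ∉ T,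
      state i.succ v = state i.castSucc u)
    (hagreement : ∀ i : Fin m, T ⊆ iter i → ∀ v ∉ T, ∀ w ∉ T,
      state i.succ v = state i.succ w) :
    (∀ v ∉ T, ∀ w ∉ T, state (Fin.last m) v = state (Fin.last m) w) ∧
    (∀ v ∉ T, ∃ u ∉ T, state (Fin.last m) v = input u) :=
  consensus_wrapup_general f m T hT iter hiter input state hinit hvalidity hagreement
end
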